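/- Let d ≥ 1 be an integer, L > 0, μ > 0, ε′ ≥ 0. Let f : ℝ^d → ℝ be L-smooth, bounded above with f* = sup f, and satisfy the (μ, ε′)-relaxed weak gradient domination condition. Let θ, u, g ∈ ℝ^d, let 0 < γ ≤ 1/(2L), and set θ⁺ = θ + γ·u. Then −f(θ⁺) ≤ −f(θ) − (μ·γ/2)·(f* − f(θ))² + γ·‖u − g‖² − (1/(4γ))·‖θ⁺ − θ‖² + ((ε′)²·γ)/2 + γ·‖∇f(θ) − g‖². -/

import Mathlib

/-!
By the descent lemma for the `L`-smooth `f` and `L γ ≤ 1/2`,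
`-f(θ + γ u) ≤ -f(θ) - γ ⟪∇f(θ), u⟫ + (γ/4) ‖u‖²`. Writing
`‖u‖²/2 - ⟪∇f(θ), u⟫ = ‖u - ∇f(θ)‖²/2 - ‖∇f(θ)‖²/2` and splitting `u - ∇f(θ)` through `g`
bounds the first part by `‖u - g‖² + ‖∇f(θ) - g‖²`, while squaring the relaxed gradient
domination gives `μ (f* - f(θ))² ≤ ε'² + ‖∇f(θ)‖²`, which absorbs `-‖∇f(θ)‖²/2`.
-/

section Descent

variable {E : Type*} [NormedAddCommGroup E] [InnerProductSpace ℝ E] [CompleteSpace E]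
  {f : E → ℝ} {L : ℝ}

theorem HasGradientAt.hasDerivAt_comp_add_smul {θ v : E} {t : ℝ} {G : E}
    (hf : HasGradientAt f G (θ + t • v)) :
    HasDerivAt (fun s : ℝ => f (θ + s • v)) (inner ℝ G v) t := by
  have hline : HasDerivAt (fun s : ℝ => θ + s • v) v t := by
    simpa using ((hasDerivAt_id t).smul_const v).const_add θ
  exact hf.hasFDerivAt.comp_hasDerivAt t hline

theorem le_apply_add_of_lipschitz_gradient (hf : Differentiable ℝ f)
    (hlip : ∀ x y, ‖gradient f x - gradient f y‖ ≤ L * ‖x - y‖) (θ v : E) :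
    f θ + inner ℝ (gradient f θ) v - L / 2 * ‖v‖ ^ 2 ≤ f (θ + v) := by
  set G := gradient f θ
  let φ : ℝ → ℝ := fun t => f (θ + t • v) - t * inner ℝ G v + L / 2 * t ^ 2 * ‖v‖ ^ 2
  have hφ (t : ℝ) : HasDerivAt φ
      (inner ℝ (gradient f (θ + t • v)) v - inner ℝ G v + L * t * ‖v‖ ^ 2) t := by
    have hline : HasDerivAt (fun s : ℝ => f (θ + s • v)) (inner ℝ (gradient f (θ + t • v)) v) t :=
      (hf _).hasGradientAt.hasDerivAt_comp_add_smul
    have hlin : HasDerivAt (fun s : ℝ => s * inner ℝ G v) (inner ℝ G v) t := by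
      simpa using (hasDerivAt_id t).mul_const (inner ℝ G v)
    have hquad : HasDerivAt (fun s : ℝ => L / 2 * s ^ 2 * ‖v‖ ^ 2) (L * t * ‖v‖ ^ 2) t :=
      (((hasDerivAt_pow 2 t).const_mul (L / 2)).mul_const _).congr_deriv (by ring)
    exact (hline.sub hlin).add hquad
  have hφ_mono : MonotoneOn φ (Set.Icc 0 1) := by
    refine monotoneOn_of_deriv_nonneg (convex_Icc 0 1)
      (fun t _ => (hφ t).continuousAt.continuousWithinAt)
      (fun t _ => (hφ t).differentiableAt.differentiableWithinAt) fun t ht => ?_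
    rw [interior_Icc] at ht
    have hgrad : ‖G - gradient f (θ + t • v)‖ ≤ L * (t * ‖v‖) := by
      simpa [norm_smul, abs_of_pos ht.1] using hlip θ (θ + t • v)
    have hinner := real_inner_le_norm (G - gradient f (θ + t • v)) v
    rw [inner_sub_left] at hinner
    rw [(hφ t).deriv]
    linarith [mul_le_mul_of_nonneg_right hgrad (norm_nonneg v)]
  have := hφ_mono (Set.left_mem_Icc.2 zero_le_one) (Set.right_mem_Icc.2 zero_le_one) zero_le_one
  simp only [φ, zero_smul, add_zero, one_smul, zero_mul, sub_zero, one_pow, mul_one] at this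
  linarith

end Descent

theorem mul_sq_le_sq_add_sq_of_sqrt_two_mul_le {μ x a b : ℝ} (hμ : 0 ≤ μ) (hx : 0 ≤ x)
    (h : √(2 * μ) * x ≤ a + b) : μ * x ^ 2 ≤ a ^ 2 + b ^ 2 := by
  have hsq : (√(2 * μ) * x) ^ 2 ≤ (a + b) ^ 2 := pow_le_pow_left₀ (by positivity) h 2
  rw [mul_pow, Real.sq_sqrt (by positivity)] at hsq
  linarith [add_sq_le (a := a) (b := b)]

section Inner

variable {E : Type*} [NormedAddCommGroup E] [InnerProductSpace ℝ E]

theorem half_norm_sq_sub_inner_le (G u g : E) :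
    ‖u‖ ^ 2 / 2 - inner ℝ G u ≤ ‖u - g‖ ^ 2 + ‖G - g‖ ^ 2 - ‖G‖ ^ 2 / 2 := by
  have htri : ‖u - G‖ ^ 2 ≤ 2 * (‖u - g‖ ^ 2 + ‖G - g‖ ^ 2) :=
    calc ‖u - G‖ ^ 2 ≤ (‖u - g‖ + ‖G - g‖) ^ 2 := by
          gcongr; simpa using norm_sub_le (u - g) (G - g)
      _ ≤ _ := add_sq_le
  rw [norm_sub_sq_real, real_inner_comm] at htri
  linarith

end Inner

theorem stmt_3
    (d : ℕ) (L : ℝ) (hL : 0 < L) (μ : ℝ) (hμ : 0 < μ)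
    (ε' : ℝ)
    (f : EuclideanSpace ℝ (Fin d) → ℝ)
    (hdiff : Differentiable ℝ f)
    (hlip : ∀ x y, ‖gradient f x - gradient f y‖ ≤ L * ‖x - y‖)
    (fstar : ℝ) (hfstar : IsLUB (Set.range f) fstar)
    (hgd : ∀ x, ε' + ‖gradient f x‖ ≥ Real.sqrt (2 * μ) * (fstar - f x))
    (θ u g : EuclideanSpace ℝ (Fin d))
    (γ : ℝ) (hγ : 0 < γ) (hγL : γ ≤ 1 / (2 * L)) :
    -f (θ + γ • u) ≤
      -f θ - (μ * γ / 2) * (fstar - f θ) ^ 2 + γ * ‖u - g‖ ^ 2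
        - (1 / (4 * γ)) * ‖(θ + γ • u) - θ‖ ^ 2 + ε' ^ 2 * γ / 2
        + γ * ‖gradient f θ - g‖ ^ 2 := by
  have hdescent := le_apply_add_of_lipschitz_gradient hdiff hlip θ (γ • u)
  have hdomination : μ * (fstar - f θ) ^ 2 ≤ ε' ^ 2 + ‖gradient f θ‖ ^ 2 :=
    mul_sq_le_sq_add_sq_of_sqrt_two_mul_le hμ.le
      (sub_nonneg.2 (hfstar.1 (Set.mem_range_self θ))) (hgd θ)
  have hstep := half_norm_sq_sub_inner_le (gradient f θ) u g
  have hLγ : L * γ ≤ 1 / 2 := by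
    rw [le_div_iff₀ (by positivity)] at hγL
    linarith
  have hcurv : L / 2 * (γ * ‖u‖) ^ 2 ≤ γ / 4 * ‖u‖ ^ 2 := by
    linarith [mul_le_mul_of_nonneg_right hLγ (by positivity : 0 ≤ γ * ‖u‖ ^ 2)]
  have hmove : 1 / (4 * γ) * ‖θ + γ • u - θ‖ ^ 2 = γ / 4 * ‖u‖ ^ 2 := by
    rw [add_sub_cancel_left, norm_smul, Real.norm_of_nonneg hγ.le]
    field_simp
  rw [hmove]
  rw [real_inner_smul_right, norm_smul, Real.norm_of_nonneg hγ.le] at hdescent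
  linarith [mul_le_mul_of_nonneg_left hstep hγ.le, mul_le_mul_of_nonneg_left hdomination hγ.le]
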